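/- Let α = (α_i)_{i≥0} and β = (β_i)_{i≥0} be the integer sequences with α_i = 1 - i and β_i = 1 + i. Then for every positive integer n, det(P_{α,β}(n)) = F(n+1), where F denotes the Fibonacci sequence with F(0) = 0, F(1) = 1. -/
import Mathlib

open Matrix

/-- Entry `P_{i,j}` of the generalized Pascal triangle associated to sequences `α`, `β`:
`P_{i,0} = α i`, `P_{0,j} = β j`, and `P_{i,j} = P_{i-1,j} + P_{i,j-1}` for `i, j ≥ 1`. -/
def pascalEntry {R : Type*} [CommRing R] (α β : ℕ → R) : ℕ → ℕ → R
  | i, 0 => α i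
  | 0, j + 1 => β (j + 1)
  | i + 1, j + 1 => pascalEntry α β i (j + 1) + pascalEntry α β (i + 1) j

/-- The generalized Pascal triangle `P_{α,β}(n)`. -/
def genPascal {R : Type*} [CommRing R] (α β : ℕ → R) (n : ℕ) :
    Matrix (Fin n) (Fin n) R :=
  Matrix.of fun i j => pascalEntry α β (i : ℕ) (j : ℕ)

/-- The Töplitz matrix `T_{α,β}(n)`: `t_{i,j} = α_{i-j}` if `i ≥ j`, else `β_{j-i}`. -/
def toeplitz {R : Type*} [CommRing R] (α β : ℕ → R) (n : ℕ) :
    Matrix (Fin n) (Fin n) R :=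
  Matrix.of fun i j => if (j : ℕ) ≤ (i : ℕ) then α ((i : ℕ) - (j : ℕ)) else β ((j : ℕ) - (i : ℕ))

/-- The unipotent lower triangular matrix `L(n)` with `L_{i,j} = C(i,j)` for `i ≥ j`. -/
def lowerL (R : Type*) [CommRing R] (n : ℕ) : Matrix (Fin n) (Fin n) R :=
  Matrix.of fun i j => if (j : ℕ) ≤ (i : ℕ) then ((i : ℕ).choose (j : ℕ) : R) else 0

/-- The binomial inverse transform `α̂_i = ∑_{k=0}^{i} (-1)^{i+k} C(i,k) α_k`. -/
def hatSeq {R : Type*} [CommRing R] (α : ℕ → R) (i : ℕ) : R :=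
  ∑ k ∈ Finset.range (i + 1), (-1 : R) ^ (i + k) * (i.choose k : R) * α k

/-- The binomial transform `α̌_i = ∑_{k=0}^{i} C(i,k) α_k`. -/
def checkSeq {R : Type*} [CommRing R] (α : ℕ → R) (i : ℕ) : R :=
  ∑ k ∈ Finset.range (i + 1), (i.choose k : R) * α k

section aux
open Finset

/-- Truncated Vandermonde sums. -/
private lemma vand1 (i j n : ℕ) (hi : i < n) :
    ∑ k ∈ range n, ((i.choose k : ℤ) * (j.choose k : ℤ)) = ((i+j).choose i : ℤ) := by
  have h1 : ∑ k ∈ range n, ((i.choose k : ℤ) * (j.choose k : ℤ))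
      = ∑ k ∈ range (i+1), ((i.choose k : ℤ) * (j.choose k : ℤ)) := by
    symm
    apply Finset.sum_subset (by simp [Finset.range_subset]; omega)
    intro k _ hk
    simp only [mem_range] at hk
    have : i.choose k = 0 := Nat.choose_eq_zero_of_lt (by omega)
    simp [this]
  have h2n : (i+j).choose i = ∑ k ∈ range (i+1), i.choose k * j.choose (i-k) := by
    rw [Nat.add_choose_eq, Finset.Nat.sum_antidiagonal_eq_sum_range_succ_mk]
  rw [h1, h2n]
  push_cast
  rw [← Finset.sum_range_reflect (fun k => ((i.choose k : ℤ) * (j.choose k : ℤ))) (i+1)]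
  apply Finset.sum_congr rfl
  intro k hk
  simp only [mem_range] at hk
  have hk' : k ≤ i := by omega
  have e1 : i + 1 - 1 - k = i - k := by omega
  rw [e1, Nat.choose_symm hk']

private lemma vand2 (i j n : ℕ) (hi : i < n) :
    ∑ k ∈ range n, ((i.choose k : ℤ) * (j.choose (k+1) : ℤ)) = ((i+j).choose (i+1) : ℤ) := by
  have h1 : ∑ k ∈ range n, ((i.choose k : ℤ) * (j.choose (k+1) : ℤ))
      = ∑ k ∈ range (i+1), ((i.choose k : ℤ) * (j.choose (k+1) : ℤ)) := by
    symm
    apply Finset.sum_subset (by simp [Finset.range_subset]; omega)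
    intro k _ hk
    simp only [mem_range] at hk
    have : i.choose k = 0 := Nat.choose_eq_zero_of_lt (by omega)
    simp [this]
  have h2n : (i+j).choose (i+1) = ∑ k ∈ range (i+2), i.choose k * j.choose (i+1-k) := by
    rw [Nat.add_choose_eq, Finset.Nat.sum_antidiagonal_eq_sum_range_succ_mk]
  have h3 : ∑ k ∈ range (i+2), i.choose k * j.choose (i+1-k)
      = ∑ k ∈ range (i+1), i.choose k * j.choose (i+1-k) := by
    rw [Finset.sum_range_succ, Nat.choose_eq_zero_of_lt (Nat.lt_succ_self i)]
    simp
  rw [h1, h2n, h3]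
  push_cast
  rw [← Finset.sum_range_reflect (fun k => ((i.choose k : ℤ) * (j.choose (k+1) : ℤ))) (i+1)]
  apply Finset.sum_congr rfl
  intro k hk
  simp only [mem_range] at hk
  have hk' : k ≤ i := by omega
  have e1 : i + 1 - 1 - k = i - k := by omega
  have e2 : i - k + 1 = i + 1 - k := by omega
  rw [e1, e2, Nat.choose_symm hk']

end aux

/-- The strict upper shift matrix. -/
private def upShift (n : ℕ) : Matrix (Fin n) (Fin n) ℤ :=
  Matrix.of fun i j => if (i : ℕ) + 1 = (j : ℕ) then 1 else 0

/-- The tridiagonal matrix with diagonal 1, superdiagonal 1, subdiagonal -1. -/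
private def triT (n : ℕ) : Matrix (Fin n) (Fin n) ℤ :=
  1 + upShift n - (upShift n)ᵀ

private lemma lowerL_apply (n : ℕ) (i j : Fin n) :
    lowerL ℤ n i j = ((i : ℕ).choose (j : ℕ) : ℤ) := by
  rw [lowerL]
  simp only [Matrix.of_apply]
  split
  · rfl
  · rename_i h
    rw [Nat.choose_eq_zero_of_lt (by omega)]
    simp

private lemma LLt_apply (n : ℕ) (i j : Fin n) :
    (lowerL ℤ n * (lowerL ℤ n)ᵀ) i j = (((i:ℕ)+(j:ℕ)).choose i : ℤ) := by
  rw [Matrix.mul_apply]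
  simp only [Matrix.transpose_apply, lowerL_apply]
  rw [Fin.sum_univ_eq_sum_range (fun k => ((i:ℕ).choose k : ℤ) * ((j:ℕ).choose k : ℤ))]
  exact vand1 i j n i.isLt

private lemma upShiftLt_apply (n : ℕ) (k j : Fin n) :
    ((upShift n) * (lowerL ℤ n)ᵀ) k j = ((j:ℕ).choose ((k:ℕ)+1) : ℤ) := by
  rw [Matrix.mul_apply]
  simp only [Matrix.transpose_apply, lowerL_apply, upShift, Matrix.of_apply]
  by_cases h : (k:ℕ) + 1 < n
  · rw [Finset.sum_eq_single (⟨(k:ℕ)+1, h⟩ : Fin n)]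
    · simp
    · intro b _ hb
      have : ¬ ((k:ℕ)+1 = (b:ℕ)) := by
        intro hc; apply hb; ext; simp [← hc]
      simp [this]
    · simp
  · rw [Nat.choose_eq_zero_of_lt (by omega)]
    push_cast
    rw [Finset.sum_eq_zero]
    intro b _
    have : ¬ ((k:ℕ)+1 = (b:ℕ)) := by omega
    simp [this]

private lemma LULt_apply (n : ℕ) (i j : Fin n) :
    (lowerL ℤ n * ((upShift n) * (lowerL ℤ n)ᵀ)) i j
      = (((i:ℕ)+(j:ℕ)).choose ((i:ℕ)+1) : ℤ) := by
  rw [Matrix.mul_apply]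
  simp only [upShiftLt_apply, lowerL_apply]
  rw [Fin.sum_univ_eq_sum_range (fun k => ((i:ℕ).choose k : ℤ) * ((j:ℕ).choose (k+1) : ℤ))]
  exact vand2 i j n i.isLt

/-- Closed form for pascalEntry with our specific sequences. -/
private lemma pascalEntry_closed :
    ∀ i j : ℕ, pascalEntry (fun i => 1 - (i : ℤ)) (fun i => 1 + (i : ℤ)) i j
      = ((i+j).choose i : ℤ) + ((i+j).choose (i+1) : ℤ) - ((i+j).choose (j+1) : ℤ)
  | i, 0 => by
      rw [pascalEntry]
      rw [Nat.add_zero, Nat.choose_self, Nat.choose_eq_zero_of_lt (by omega),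
        Nat.choose_one_right]
      push_cast; ring
  | 0, j+1 => by
      rw [pascalEntry]
      rw [Nat.zero_add, Nat.choose_zero_right, Nat.choose_one_right, Nat.choose_succ_self]
      push_cast; ring
  | i+1, j+1 => by
      rw [pascalEntry, pascalEntry_closed i (j+1), pascalEntry_closed (i+1) j]
      have e1 : i + 1 + (j + 1) = (i + (j+1)) + 1 := by ring
      have e2 : i + 1 + j = i + (j + 1) := by ring
      rw [e1, e2]
      rw [Nat.choose_succ_succ (i + (j+1)) i,
        Nat.choose_succ_succ (i + (j+1)) (i+1),
        Nat.choose_succ_succ (i + (j+1)) (j+1)]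
      push_cast; ring

/-- The main decomposition. -/
private lemma genPascal_eq (n : ℕ) :
    genPascal (fun i => 1 - (i : ℤ)) (fun i => 1 + (i : ℤ)) n
      = lowerL ℤ n * triT n * (lowerL ℤ n)ᵀ := by
  ext i j
  rw [genPascal, Matrix.of_apply, pascalEntry_closed]
  rw [triT]
  have expand : lowerL ℤ n * (1 + upShift n - (upShift n)ᵀ) * (lowerL ℤ n)ᵀ
      = lowerL ℤ n * (lowerL ℤ n)ᵀ + lowerL ℤ n * (upShift n * (lowerL ℤ n)ᵀ)
        - (lowerL ℤ n * (upShift n * (lowerL ℤ n)ᵀ))ᵀ := by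
    have : (lowerL ℤ n * (upShift n * (lowerL ℤ n)ᵀ))ᵀ
        = lowerL ℤ n * ((upShift n)ᵀ * (lowerL ℤ n)ᵀ) := by
      rw [Matrix.transpose_mul, Matrix.transpose_mul, Matrix.transpose_transpose]
      noncomm_ring
    rw [this]
    noncomm_ring
  rw [expand]
  simp only [Matrix.sub_apply, Matrix.add_apply, Matrix.transpose_apply,
    LLt_apply, LULt_apply]
  rw [Nat.add_comm (j:ℕ) (i:ℕ)]

/-- Determinant of L is 1. -/
private lemma det_lowerL (n : ℕ) : (lowerL ℤ n).det = 1 := by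
  rw [Matrix.det_of_lowerTriangular]
  · rw [Finset.prod_eq_one]
    intro i _
    simp [lowerL]
  · intro i j hij
    have h : i < j := hij
    have h2 : (i:ℕ) < (j:ℕ) := h
    simp [lowerL, Nat.choose_eq_zero_of_lt h2]

/-- Entries of triT. -/
private lemma triT_apply (n : ℕ) (i j : Fin n) :
    triT n i j = (if (i:ℕ) = (j:ℕ) then 1 else 0) + (if (i:ℕ) + 1 = (j:ℕ) then 1 else 0)
      - (if (j:ℕ) + 1 = (i:ℕ) then 1 else 0) := by
  rw [triT]
  simp only [Matrix.sub_apply, Matrix.add_apply, Matrix.transpose_apply, upShift,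
    Matrix.of_apply, Matrix.one_apply]
  congr 2
  simp [Fin.ext_iff, eq_comm]

/-- det of tridiagonal is Fibonacci. -/
private lemma det_triT : ∀ n : ℕ, (triT n).det = (Nat.fib (n+1) : ℤ)
  | 0 => by simp [Matrix.det_fin_zero]
  | 1 => by
      rw [Matrix.det_fin_one, triT_apply]
      simp
  | (n+2) => by
      have ih1 : (triT (n+1)).det = (Nat.fib (n+2) : ℤ) := det_triT (n+1)
      have ih0 := det_triT n
      have hsub1 : (triT (n+2)).submatrix ((0:Fin (n+2)).succAbove) Fin.succ = triT (n+1) := by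
        ext k l
        simp only [Matrix.submatrix_apply, Fin.succAbove_zero, triT_apply, Fin.val_succ,
          Nat.add_right_cancel_iff]
      -- the (1,0) minor
      set N := (triT (n+2)).submatrix ((1:Fin (n+2)).succAbove) Fin.succ with hN
      have hN00 : N 0 0 = 1 := by
        simp [hN, Matrix.submatrix_apply, triT_apply, Fin.succ_succAbove_zero]
      have hNrow : ∀ l : Fin n, N 0 l.succ = 0 := by
        intro l
        simp [hN, Matrix.submatrix_apply, triT_apply, Fin.succ_succAbove_zero]
      have hsub2 : N.submatrix Fin.succ ((0:Fin (n+1)).succAbove) = triT n := by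
        ext k l
        have h1 : (1 : Fin (n+2)).succAbove k.succ = k.succ.succ := by
          have : (1 : Fin (n+2)) = (0 : Fin (n+1)).succ := rfl
          rw [this, Fin.succ_succAbove_succ, Fin.succAbove_zero]
        simp only [hN, Matrix.submatrix_apply, Fin.succAbove_zero, h1, triT_apply,
          Fin.val_succ, Nat.add_right_cancel_iff]
      have hdetN : N.det = (Nat.fib (n+1) : ℤ) := by
        rw [Matrix.det_succ_row_zero, Fin.sum_univ_succ]
        rw [hN00]
        have : ∑ l : Fin n, (-1:ℤ)^((l.succ:ℕ)) * N 0 l.succ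
            * (N.submatrix Fin.succ l.succ.succAbove).det = 0 := by
          apply Finset.sum_eq_zero
          intro l _
          rw [hNrow]; ring
        rw [this, hsub2, ih0]
        simp
      rw [Matrix.det_succ_column_zero, Fin.sum_univ_succ, Fin.sum_univ_succ]
      have h00 : triT (n+2) 0 0 = 1 := by simp [triT_apply]
      have h10 : triT (n+2) (Fin.succ 0) 0 = -1 := by simp [triT_apply]
      have htail : ∑ i : Fin n, (-1:ℤ)^((i.succ.succ:ℕ)) * triT (n+2) i.succ.succ 0
          * ((triT (n+2)).submatrix i.succ.succ.succAbove Fin.succ).det = 0 := by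
        apply Finset.sum_eq_zero
        intro i _
        have : triT (n+2) i.succ.succ 0 = 0 := by
          rw [triT_apply]
          simp
        rw [this]; ring
      rw [htail, h00, h10]
      have e1 : ((0 : Fin (n+2)) : ℕ) = 0 := rfl
      have e2 : ((Fin.succ 0 : Fin (n+2)) : ℕ) = 1 := rfl
      rw [e1, e2, hsub1, ih1]
      have hNsub : (triT (n+2)).submatrix ((Fin.succ 0 : Fin (n+2)).succAbove) Fin.succ = N := by
        rfl
      rw [hNsub, hdetN]
      have hfib : Nat.fib (n+2+1) = Nat.fib (n+1) + Nat.fib (n+2) := Nat.fib_add_two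
      rw [hfib]
      push_cast; ring

/-- for `α_i = 1 - i` and `β_i = 1 + i`, `det(P_{α,β}(n)) = F(n+1)`. -/
theorem det_genPascal_fib_succ (n : ℕ) (hn : 0 < n) :
    (genPascal (fun i => 1 - (i : ℤ)) (fun i => 1 + (i : ℤ)) n).det =
      (Nat.fib (n + 1) : ℤ) := by
  rw [genPascal_eq, Matrix.det_mul, Matrix.det_mul, det_lowerL, Matrix.det_transpose,
    det_lowerL, det_triT]
  ring
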